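/- arXiv:0911.1538 — 2 statements merged into one kernel-verified Lean document; each statement's English description precedes it below -/
import Mathlib

section
/- Let f : ℝ × ℝ → ℝ be continuous and 1-periodic in the time variable. Suppose the equation x' = f(t,x) admits a subharmonic solution of order m for some integer m > 1, i.e. there exist a solution x and an integer m ≥ 2 with x(t+m) = x(t) for all t ∈ ℝ and x(t₁+1) ≠ x(t₁) for some t₁ ∈ ℝ. Then for every integer n ≥ 1 there exists a solution xₙ of x' = f(t,x) with xₙ(t+n) = xₙ(t) for all t ∈ ℝ and such that no integer k with 1 ≤ k < n satisfies xₙ(t+k) = xₙ(t) for all t ∈ ℝ. -/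
/-- `x` is a (classical) solution of the ODE `x' = f(t,x)` on the whole real line. -/
def IsSolution (f : ℝ × ℝ → ℝ) (x : ℝ → ℝ) : Prop :=
  ∀ t : ℝ, HasDerivAt x (f (t, x t)) t


/-!
Integer translates of a solution are solutions (`f` is 1-periodic in `t`), and solutions can be
glued along integer-length blocks as long as they agree at the block boundaries.

If `x` is `p`-periodic (`p ≥ 3`) but not 1-periodic, the increment `G = x (· + 1) - x` has a zero
(look at a maximum of `x`), and some zero `z` has `G ≢ 0` on `[z + 1, z + 2]`. Then
`x (z + 1) = x z = x (z + p)`, so the `(p - 1)`-periodic extension of `x` from `[z + 1, z + p]`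
is a solution, still not 1-periodic. Descending from `m` gives a 2-periodic solution `u` that is
not 1-periodic; `G` is then antiperiodic, so it vanishes at some `σ`, and `u` takes the same value
at all points of `σ + ℤ`. Following the strands `u` and `u (· + 1)` block by block in a pattern
of period `n` produces a solution of minimal integer period `n`.
-/

open Function Set Filter

variable {f : ℝ × ℝ → ℝ} {x : ℝ → ℝ}

theorem IsSolution.continuous (hx : IsSolution f x) : Continuous x :=
  continuous_iff_continuousAt.2 fun t => (hx t).continuousAt

theorem IsSolution.comp_add_int (hper : ∀ t x : ℝ, f (t + 1, x) = f (t, x))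
    (hx : IsSolution f x) (j : ℤ) : IsSolution f (fun t => x (t + j)) := by
  intro t
  have hperj : f (t + j, x (t + j)) = f (t, x (t + j)) := by
    simpa using ((show Periodic (fun s => f (s, x (t + j))) 1 from fun s => hper s _).int_mul j) t
  simpa [hperj] using (hx (t + j)).comp_add_const t j

noncomputable def glueBlocks (a L : ℝ) (y : ℤ → ℝ → ℝ) (t : ℝ) : ℝ := y ⌊(t - a) / L⌋ t

section glueBlocks

variable {a L : ℝ} {y : ℤ → ℝ → ℝ}

theorem glueBlocks_eq_of_mem_Ico (hL : 0 < L) {k : ℤ} {t : ℝ}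
    (ht : t ∈ Ico (a + k * L) (a + (k + 1) * L)) : glueBlocks a L y t = y k t := by
  have hfloor : ⌊(t - a) / L⌋ = k := by
    rw [Int.floor_eq_iff, le_div_iff₀ hL, div_lt_iff₀ hL]
    constructor <;> linarith [ht.1, ht.2]
  rw [glueBlocks, hfloor]

theorem glueBlocks_eqOn_Icc (hL : 0 < L)
    (hmatch : ∀ k : ℤ, y k (a + (k + 1) * L) = y (k + 1) (a + (k + 1) * L)) (k : ℤ) :
    EqOn (glueBlocks a L y) (y k) (Icc (a + k * L) (a + (k + 1) * L)) := by
  rintro t ⟨hkt, htk⟩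
  rcases htk.lt_or_eq with htk | rfl
  · exact glueBlocks_eq_of_mem_Ico hL ⟨hkt, htk⟩
  · rw [hmatch, glueBlocks_eq_of_mem_Ico hL]
    push_cast
    constructor <;> linarith

theorem isSolution_glueBlocks (hL : 0 < L) (hy : ∀ k, IsSolution f (y k))
    (hmatch : ∀ k : ℤ, y k (a + (k + 1) * L) = y (k + 1) (a + (k + 1) * L)) :
    IsSolution f (glueBlocks a L y) := by
  intro t
  set r := (t - a) / L
  have hr : t = a + r * L := by rw [div_mul_cancel₀ _ hL.ne']; ring
  -- `t` lies in the block of `⌊r⌋` from the right and in the block of `⌈r⌉ - 1` from the left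
  set k := ⌊r⌋
  set j := ⌈r⌉ - 1
  have hk : t ∈ Ico (a + k * L) (a + (k + 1) * L) := by
    rw [hr]
    constructor <;> gcongr
    exacts [Int.floor_le r, Int.lt_floor_add_one r]
  have hj : t ∈ Ioc (a + j * L) (a + (j + 1) * L) := by
    rw [hr]
    constructor <;> gcongr <;> push_cast [j]
    exacts [by linarith [Int.ceil_lt_add_one r], by linarith [Int.le_ceil r]]
  have hright : HasDerivWithinAt (glueBlocks a L y) (f (t, glueBlocks a L y t)) (Ici t) t := by
    have hEq := glueBlocks_eqOn_Icc hL hmatch k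
    rw [hEq (Ico_subset_Icc_self hk)]
    exact (hy k t).hasDerivWithinAt.congr_of_eventuallyEq
      (mem_of_superset (Icc_mem_nhdsGE_of_mem hk) hEq) (hEq (Ico_subset_Icc_self hk))
  have hleft : HasDerivWithinAt (glueBlocks a L y) (f (t, glueBlocks a L y t)) (Iic t) t := by
    have hEq := glueBlocks_eqOn_Icc hL hmatch j
    rw [hEq (Ioc_subset_Icc_self hj)]
    exact (hy j t).hasDerivWithinAt.congr_of_eventuallyEq
      (mem_of_superset (Icc_mem_nhdsLE_of_mem hj) hEq) (hEq (Ioc_subset_Icc_self hj))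
  simpa using hleft.union hright

theorem glueBlocks_periodic (hL : L ≠ 0) (N : ℕ) (hy : ∀ k t, y (k + N) (t + N * L) = y k t) :
    Periodic (glueBlocks a L y) (N * L) := by
  intro t
  have hfloor : ⌊(t + N * L - a) / L⌋ = ⌊(t - a) / L⌋ + N := by
    rw [← Int.floor_add_natCast]
    congr 1
    field_simp
    ring
  simp only [glueBlocks, hfloor, hy]

end glueBlocks

theorem IsSolution.exists_periodic_extension (hper : ∀ t x : ℝ, f (t + 1, x) = f (t, x))
    (hx : IsSolution f x) {a : ℝ} {q : ℕ} (hq : 0 < q) (hxq : x (a + q) = x a) :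
    ∃ u, IsSolution f u ∧ Periodic u q ∧ EqOn u x (Icc a (a + q)) := by
  have hqR : (0 : ℝ) < q := by exact_mod_cast hq
  set y : ℤ → ℝ → ℝ := fun k t => x (t + ((-(k * q) : ℤ) : ℝ))
  have hmatch : ∀ k : ℤ, y k (a + (k + 1) * q) = y (k + 1) (a + (k + 1) * q) := by
    intro k
    simp only [y]
    push_cast
    convert hxq using 2 <;> ring
  refine ⟨glueBlocks a q y, isSolution_glueBlocks hqR (fun k => hx.comp_add_int hper _) hmatch, ?_, ?_⟩
  · simpa using glueBlocks_periodic (a := a) hqR.ne' 1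
      (fun k t => by simp only [y]; push_cast; ring_nf)
  · simpa [y] using glueBlocks_eqOn_Icc hqR hmatch 0

theorem Function.Periodic.exists_apply_add_eq {c : ℝ} (hxc : Periodic x c) (hc : c ≠ 0)
    (hx : Continuous x) (h : ℝ) : ∃ t, x (t + h) = x t := by
  -- at a maximum point `t₀` the increment `x (· + h) - x` is `≤ 0`, and at `t₀ - h` it is `≥ 0`
  obtain ⟨_, ⟨t₀, rfl⟩, hmax⟩ :=
    (hxc.compact_of_continuous hc hx).exists_isGreatest (range_nonempty x)
  have hG : Continuous fun t => x (t + h) - x t := by fun_prop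
  have h0 : (0 : ℝ) ∈ uIcc (x (t₀ - h + h) - x (t₀ - h)) (x (t₀ + h) - x t₀) := by
    rw [sub_add_cancel, mem_uIcc]
    right
    constructor <;> linarith [hmax (mem_range_self (t₀ - h)), hmax (mem_range_self (t₀ + h))]
  obtain ⟨t, -, ht⟩ := intermediate_value_uIcc hG.continuousOn h0
  exact ⟨t, sub_eq_zero.1 ht⟩

/-- If instead `G` vanished on `[z + 1, z + 2]` for every zero `z`, the zeros would propagate
along `z₀ + ℕ`, so `G` would vanish on `[z₀ + 1, ∞)` and hence everywhere by periodicity. -/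
theorem Function.Periodic.exists_zero_ne_zero_Icc {G : ℝ → ℝ} {c : ℝ} (hG : Periodic G c)
    (hc : 0 < c) {z₀ s₀ : ℝ} (hz₀ : G z₀ = 0) (hs₀ : G s₀ ≠ 0) :
    ∃ z, G z = 0 ∧ ∃ s ∈ Icc (z + 1) (z + 2), G s ≠ 0 := by
  by_contra! H
  have hnat : ∀ j : ℕ, G (z₀ + j) = 0 := by
    intro j
    induction j with
    | zero => simpa using hz₀
    | succ j ih => exact H _ ih _ ⟨by push_cast; linarith, by push_cast; linarith⟩
  have hray : ∀ s, z₀ + 1 ≤ s → G s = 0 := fun s hs =>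
    H _ (hnat ⌊s - z₀ - 1⌋₊) s
      ⟨by linarith [Nat.floor_le (by linarith : 0 ≤ s - z₀ - 1)],
        by linarith [Nat.lt_floor_add_one (s - z₀ - 1)]⟩
  obtain ⟨N, hN⟩ := exists_nat_gt ((z₀ + 1 - s₀) / c)
  rw [div_lt_iff₀ hc] at hN
  exact hs₀ (hG.nat_mul N s₀ ▸ hray _ (by linarith))

theorem IsSolution.exists_periodic_pred (hper : ∀ t x : ℝ, f (t + 1, x) = f (t, x))
    (hx : IsSolution f x) {p : ℕ} (hp : 3 ≤ p) (hxp : Periodic x p) (hx1 : ¬Periodic x 1) :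
    ∃ u, IsSolution f u ∧ Periodic u (p - 1 : ℕ) ∧ ¬Periodic u 1 := by
  have hpR : (3 : ℝ) ≤ p := by exact_mod_cast hp
  set G : ℝ → ℝ := fun t => x (t + 1) - x t
  have hG : Periodic G p := fun t => by
    show x (t + p + 1) - x (t + p) = x (t + 1) - x t
    rw [add_right_comm, hxp, hxp]
  obtain ⟨z₀, hz₀⟩ := hxp.exists_apply_add_eq (by positivity) hx.continuous 1
  obtain ⟨s₀, hs₀⟩ : ∃ s, G s ≠ 0 := by simpa [Periodic, G, sub_eq_zero] using hx1
  obtain ⟨z, hz, s, hs, hGs⟩ := hG.exists_zero_ne_zero_Icc (by positivity) (sub_eq_zero.2 hz₀) hs₀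
  have hwrap : x (z + 1 + (p - 1 : ℕ)) = x (z + 1) := by
    rw [Nat.cast_sub (by omega), Nat.cast_one, add_add_sub_cancel, hxp]
    exact (sub_eq_zero.1 hz).symm
  obtain ⟨u, hu, hup, hux⟩ := hx.exists_periodic_extension hper (by omega) hwrap
  refine ⟨u, hu, hup, fun hu1 => hGs ?_⟩
  have hq : ((p - 1 : ℕ) : ℝ) = p - 1 := by rw [Nat.cast_sub (by omega), Nat.cast_one]
  simp only [G]
  rw [← hux ⟨by linarith [hs.1], by rw [hq]; linarith [hs.2]⟩,
    ← hux ⟨by linarith [hs.1], by rw [hq]; linarith [hs.2]⟩, hu1 s, sub_self]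

theorem IsSolution.exists_periodic_two (hper : ∀ t x : ℝ, f (t + 1, x) = f (t, x))
    (hx : IsSolution f x) {p : ℕ} (hp : 2 ≤ p) (hxp : Periodic x p) (hx1 : ¬Periodic x 1) :
    ∃ u, IsSolution f u ∧ Periodic u 2 ∧ ¬Periodic u 1 := by
  induction p, hp using Nat.le_induction generalizing x with
  | base => exact ⟨x, hx, by exact_mod_cast hxp, hx1⟩
  | succ p hp ih =>
    obtain ⟨u, hu, hup, hu1⟩ := hx.exists_periodic_pred hper (by omega) hxp hx1
    exact ih hu (by simpa using hup) hu1

theorem Function.Periodic.apply_add_int_eq {α : Type*} {u : ℝ → α} (hu2 : Periodic u 2) {σ : ℝ}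
    (hσ : u (σ + 1) = u σ) (j : ℤ) : u (σ + j) = u σ := by
  obtain ⟨i, rfl | rfl⟩ := Int.even_or_odd' j
  · simpa [mul_comm] using hu2.int_mul i σ
  · simpa [mul_comm, add_right_comm, ← add_assoc, hσ] using hu2.int_mul i (σ + 1)

theorem Function.Periodic.exists_mem_Ioc_apply_add_one_eq {u : ℝ → ℝ} (hu2 : Periodic u 2)
    (hu : Continuous u) {s : ℝ} (hs : u (s + 1) ≠ u s) : ∃ σ ∈ Ioc (s - 1) s, u (σ + 1) = u σ := by
  have hG : Continuous fun t => u (t + 1) - u t := by fun_prop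
  have hanti : u (s - 1 + 1) - u (s - 1) = -(u (s + 1) - u s) := by
    rw [sub_add_cancel, ← hu2 (s - 1)]
    ring_nf
  have h0 : (0 : ℝ) ∈ uIcc (u (s - 1 + 1) - u (s - 1)) (u (s + 1) - u s) := by
    rw [hanti, mem_uIcc]
    rcases le_total 0 (u (s + 1) - u s) with h | h
    · exact Or.inl ⟨by linarith, h⟩
    · exact Or.inr ⟨h, by linarith⟩
  obtain ⟨σ, hσ, hσ0⟩ := intermediate_value_uIcc hG.continuousOn h0
  rw [uIcc_of_le (by linarith)] at hσ
  refine ⟨σ, ⟨hσ.1.lt_of_ne ?_, hσ.2⟩, sub_eq_zero.1 hσ0⟩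
  rintro rfl
  exact hs (by linarith [hanti])

theorem IsSolution.exists_minimal_period (hper : ∀ t x : ℝ, f (t + 1, x) = f (t, x))
    {u : ℝ → ℝ} (hu : IsSolution f u) (hu2 : Periodic u 2) (hu1 : ¬Periodic u 1) (n : ℕ) :
    ∃ y, IsSolution f y ∧ Periodic y n ∧ ∀ k : ℕ, 1 ≤ k → k < n → ¬Periodic y k := by
  obtain ⟨s, hs⟩ : ∃ s, u (s + 1) ≠ u s := by simpa [Periodic] using hu1
  obtain ⟨σ, hσs, hσ⟩ := hu2.exists_mem_Ioc_apply_add_one_eq hu.continuous hs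
  -- on the blocks `k ≡ 0 [ZMOD n]` follow the strand `u (· + 1)`, elsewhere `u`; the two strands
  -- meet at every point of `σ + ℤ`
  set d : ℤ → ℤ := fun k => (if (n : ℤ) ∣ k then 1 else 0) - k
  set y : ℤ → ℝ → ℝ := fun k t => u (t + d k)
  have hmatch : ∀ k : ℤ, y k (σ + (k + 1) * 1) = y (k + 1) (σ + (k + 1) * 1) := by
    intro k
    simp only [y]
    rw [show σ + (k + 1) * 1 + d k = σ + ((k + 1 + d k : ℤ) : ℝ) by push_cast; ring,
      show σ + (k + 1) * 1 + d (k + 1) = σ + ((k + 1 + d (k + 1) : ℤ) : ℝ) by push_cast; ring,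
      hu2.apply_add_int_eq hσ, hu2.apply_add_int_eq hσ]
  refine ⟨glueBlocks σ 1 y, isSolution_glueBlocks one_pos (fun k => hu.comp_add_int hper _) hmatch,
    ?_, fun k hk hkn hyk => hs ?_⟩
  · have hd : ∀ k : ℤ, d (k + n) = d k - n := fun k => by simp only [d, dvd_add_self_right]; ring
    simpa using glueBlocks_periodic (a := σ) one_ne_zero n
      (fun k t => by simp only [y, hd]; push_cast; ring_nf)
  · have hs0 : glueBlocks σ 1 y s = u (s + 1) := by
      rw [glueBlocks_eq_of_mem_Ico one_pos (k := 0)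
        ⟨by push_cast; linarith [hσs.2], by push_cast; linarith [hσs.1]⟩]
      simp [y, d]
    have hsk : glueBlocks σ 1 y (s + k) = u s := by
      rw [glueBlocks_eq_of_mem_Ico one_pos (k := k)
        ⟨by push_cast; linarith [hσs.2], by push_cast; linarith [hσs.1]⟩]
      have hndvd : ¬(n : ℤ) ∣ k := by
        rw [Int.natCast_dvd_natCast]
        exact Nat.not_dvd_of_pos_of_lt hk hkn
      simp [y, d, hndvd]
    rw [← hs0, ← hsk, hyk s]

theorem subharmonic_implies_all_periods_general
    (f : ℝ × ℝ → ℝ)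
    (hper : ∀ t x : ℝ, f (t + 1, x) = f (t, x))
    (x : ℝ → ℝ) (m : ℕ) (hm : 2 ≤ m)
    (hx : IsSolution f x)
    (hxm : ∀ t : ℝ, x (t + m) = x t)
    (t₁ : ℝ) (ht₁ : x (t₁ + 1) ≠ x t₁) :
    ∀ n : ℕ, 1 ≤ n → ∃ xn : ℝ → ℝ, IsSolution f xn ∧
      (∀ t : ℝ, xn (t + n) = xn t) ∧
      ∀ k : ℕ, 1 ≤ k → k < n → ¬ (∀ t : ℝ, xn (t + k) = xn t) := by
  obtain ⟨u, hu, hu2, hu1⟩ := hx.exists_periodic_two hper hm hxm fun h => ht₁ (h t₁)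
  exact fun n _ => hu.exists_minimal_period hper hu2 hu1 n

theorem subharmonic_implies_all_periods
    (f : ℝ × ℝ → ℝ) (hf : Continuous f)
    (hper : ∀ t x : ℝ, f (t + 1, x) = f (t, x))
    (x : ℝ → ℝ) (m : ℕ) (hm : 2 ≤ m)
    (hx : IsSolution f x)
    (hxm : ∀ t : ℝ, x (t + m) = x t)
    (t₁ : ℝ) (ht₁ : x (t₁ + 1) ≠ x t₁) :
    ∀ n : ℕ, 1 ≤ n → ∃ xn : ℝ → ℝ, IsSolution f xn ∧
      (∀ t : ℝ, xn (t + n) = xn t) ∧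
      ∀ k : ℕ, 1 ≤ k → k < n → ¬ (∀ t : ℝ, xn (t + k) = xn t) :=
  subharmonic_implies_all_periods_general f hper x m hm hx hxm t₁ ht₁
end

section
/- (Periodic symbol sequences are realized by periodic solutions) Let f : ℝ × ℝ → ℝ be continuous and 1-periodic in the time variable, and suppose the equation x' = f(t,x) admits a solution x with x(t+2) = x(t) for all t ∈ ℝ and x(t₁+1) > x(t₁) for some t₁ ∈ ℝ. Then there exist real numbers p < q and s₁ ∈ ℝ such that for every integer k ≥ 1 and every k-periodic sequence η = (η_i)_{i∈ℤ} ∈ {0,1}^ℤ (i.e. η_{i+k} = η_i for all i ∈ ℤ) there exists a solution w : ℝ → ℝ of x' = f(t,x) with w(t+k) = w(t) for all t ∈ ℝ and, for all i ∈ ℤ: w(s₁+i) = q if η_i = 0 and w(s₁+i) = p if η_i = 1. -/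
open Set

theorem exists_apply_add_one_eq_of_periodic_two {x : ℝ → ℝ} (hx : Continuous x)
    (hx2 : Function.Periodic x 2) {t₁ : ℝ} (ht₁ : x t₁ < x (t₁ + 1)) :
    ∃ b ∈ Ioo t₁ (t₁ + 1), x (b + 1) = x b := by
  have hgap : ContinuousOn (fun t => x (t + 1) - x t) (Icc t₁ (t₁ + 1)) := by fun_prop
  have hsign : (0 : ℝ) ∈ Ioo (x (t₁ + 1 + 1) - x (t₁ + 1)) (x (t₁ + 1) - x t₁) := by
    rw [add_assoc, one_add_one_eq_two, hx2]
    constructor <;> linarith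
  obtain ⟨b, hb, hb0⟩ := intermediate_value_Ioo' (by linarith) hgap hsign
  exact ⟨b, hb, sub_eq_zero.1 hb0⟩

theorem Function.Periodic.apply_add_intCast_eq_of_apply_add_one_eq {x : ℝ → ℝ}
    (hx2 : Function.Periodic x 2) {b : ℝ} (hb : x (b + 1) = x b) (m : ℤ) : x (b + m) = x b := by
  obtain ⟨n, rfl | rfl⟩ := Int.even_or_odd' m
  · push_cast
    rw [mul_comm, hx2.int_mul n b]
  · push_cast
    rw [show b + (2 * n + 1) = b + 1 + n * 2 by ring, hx2.int_mul n (b + 1), hb]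

theorem ceil_sub_eq_of_mem_Ioc {b t : ℝ} {j : ℤ} (ht : t ∈ Ioc (b + j - 1) (b + j)) :
    ⌈t - b⌉ = j :=
  Int.ceil_eq_iff.2 ⟨by linarith [ht.1], by linarith [ht.2]⟩

namespace IsSolution

variable {f : ℝ × ℝ → ℝ}

theorem continuous_s10 {x : ℝ → ℝ} (hx : IsSolution f x) : Continuous x :=
  continuous_iff_continuousAt.2 fun t => (hx t).continuousAt

theorem comp_add_intCast (hper : ∀ t x : ℝ, f (t + 1, x) = f (t, x)) {x : ℝ → ℝ}
    (hx : IsSolution f x) (n : ℤ) : IsSolution f (fun t => x (t + n)) := by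
  intro t
  have hfn : f (t + n, x (t + n)) = f (t, x (t + n)) := by
    have hperiodic : Function.Periodic (fun s => f (s, x (t + n))) 1 := fun s => hper s _
    simpa using hperiodic.int_mul n t
  simpa [← hfn] using (hx (t + n)).comp_add_const t n

theorem glue {y : ℤ → ℝ → ℝ} (hy : ∀ j, IsSolution f (y j)) (b : ℝ)
    (hjunction : ∀ j : ℤ, y j (b + j) = y (j + 1) (b + j)) :
    IsSolution f (fun t => y ⌈t - b⌉ t) := by
  intro t
  set j := ⌈t - b⌉
  show HasDerivAt _ (f (t, y j t)) t
  have hcell : ∀ s ∈ Ioc (b + j - 1) (b + j), y ⌈s - b⌉ s = y j s := fun s hs => by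
    rw [ceil_sub_eq_of_mem_Ioc hs]
  have htj : t ∈ Ioc (b + j - 1) (b + j) :=
    ⟨by linarith [Int.ceil_lt_add_one (t - b)], by linarith [Int.le_ceil (t - b)]⟩
  rcases htj.2.lt_or_eq with hlt | heq
  · refine (hy j t).congr_of_eventuallyEq ?_
    filter_upwards [Ioo_mem_nhds htj.1 hlt] with s hs using hcell s (Ioo_subset_Ioc_self hs)
  · rw [← hasDerivWithinAt_univ, ← Iic_union_Ioi (a := t)]
    refine HasDerivWithinAt.union ?_ ?_
    · refine (hy j t).hasDerivWithinAt.congr_of_eventuallyEq ?_ (hcell t htj)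
      filter_upwards [Ioc_mem_nhdsLE htj.1] with s hs using hcell s ⟨hs.1, heq ▸ hs.2⟩
    · have hjump : y j t = y (j + 1) t := heq ▸ hjunction j
      have hright : ∀ s ∈ Ioo t (t + 1), y ⌈s - b⌉ s = y (j + 1) s := fun s hs => by
        rw [ceil_sub_eq_of_mem_Ioc (j := j + 1) ⟨by push_cast; linarith [hs.1],
          by push_cast; linarith [hs.2]⟩]
      rw [hjump]
      refine (hy (j + 1) t).hasDerivWithinAt.congr_of_eventuallyEq ?_ ((hcell t htj).trans hjump)
      filter_upwards [Ioo_mem_nhdsGT (lt_add_one t)] using hright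

end IsSolution

theorem periodic_coin_tossing_realization_general
    (f : ℝ × ℝ → ℝ)
    (hper : ∀ t x : ℝ, f (t + 1, x) = f (t, x))
    (x : ℝ → ℝ) (hx : IsSolution f x)
    (hx2 : ∀ t : ℝ, x (t + 2) = x t)
    (t₁ : ℝ) (ht₁ : x t₁ < x (t₁ + 1)) :
    ∃ p q s₁ : ℝ, p < q ∧
      ∀ (k : ℕ), 1 ≤ k → ∀ η : ℤ → Fin 2, (∀ i : ℤ, η (i + k) = η i) →
        ∃ w : ℝ → ℝ, IsSolution f w ∧ (∀ t : ℝ, w (t + k) = w t) ∧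
          ∀ i : ℤ, (η i = 0 → w (s₁ + i) = q) ∧ (η i = 1 → w (s₁ + i) = p) := by
  obtain ⟨b, hb, hbx⟩ := exists_apply_add_one_eq_of_periodic_two hx.continuous_s10 hx2 ht₁
  have hlattice := Function.Periodic.apply_add_intCast_eq_of_apply_add_one_eq hx2 hbx
  refine ⟨x t₁, x (t₁ + 1), t₁, ht₁, fun k _ η hη => ?_⟩
  -- `j + σ j = 1 + η j` depends on `j` only through `η j`: this gives both the values at `t₁ + j`
  -- and `k`-periodicity.
  let σ : ℤ → ℤ := fun j => 1 + (η j : ℕ) - j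
  refine ⟨fun t => x (t + σ ⌈t - b⌉), ?_, fun t => ?_, fun i => ?_⟩
  · refine IsSolution.glue (fun j => hx.comp_add_intCast hper (σ j)) b fun j => ?_
    simp only [add_assoc, ← Int.cast_add, hlattice]
  · have hceil : ⌈t + k - b⌉ = ⌈t - b⌉ + k := by rw [add_sub_right_comm, Int.ceil_add_natCast]
    have hη' : η (⌈t - b⌉ + k) = η ⌈t - b⌉ := hη _
    simp only [hceil, σ, hη']
    push_cast
    congr 1
    ring
  · have hceil : ⌈t₁ + i - b⌉ = i :=
      ceil_sub_eq_of_mem_Ioc ⟨by linarith [hb.2], by linarith [hb.1]⟩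
    have hw : x (t₁ + i + σ ⌈t₁ + i - b⌉) = x (t₁ + 1 + (η i : ℕ)) := by
      simp only [hceil, σ]
      push_cast
      congr 1
      ring
    simp only [hw]
    exact ⟨fun h => by simp [h], fun h => by simp [h, add_assoc, one_add_one_eq_two, hx2]⟩

theorem periodic_coin_tossing_realization
    (f : ℝ × ℝ → ℝ) (hf : Continuous f)
    (hper : ∀ t x : ℝ, f (t + 1, x) = f (t, x))
    (x : ℝ → ℝ) (hx : IsSolution f x)
    (hx2 : ∀ t : ℝ, x (t + 2) = x t)
    (t₁ : ℝ) (ht₁ : x t₁ < x (t₁ + 1)) :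
    ∃ p q s₁ : ℝ, p < q ∧
      ∀ (k : ℕ), 1 ≤ k → ∀ η : ℤ → Fin 2, (∀ i : ℤ, η (i + k) = η i) →
        ∃ w : ℝ → ℝ, IsSolution f w ∧ (∀ t : ℝ, w (t + k) = w t) ∧
          ∀ i : ℤ, (η i = 0 → w (s₁ + i) = q) ∧ (η i = 1 → w (s₁ + i) = p) :=
  periodic_coin_tossing_realization_general f hper x hx hx2 t₁ ht₁
end
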